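/- Let y = Σ_{l=1}^{m−1} s_l·2^{l−1} ∈ {0, …, 2ⁿ−1} and let x ∈ ℂ^{2^{n+1}} be the vector (H^{⊗n} e_y) ⊗ α, where the ℂ² factor carrying α occupies the least-significant qubit (bit 0). Then for every index j = Σ_{l=0}^{n} j_l·2^l with bits j_l ∈ {0,1}, the coordinate x_j equals 2^{−n/2}·(−1)^{Σ_{l=1}^{m−1} j_l s_l}·α_{j₀}. Consequently x_{j + 2^m} = x_j whenever j + 2^m < 2^{n+1}, and if s_{m−1} = 1 then x_{j + 2^{m−1}} = −x_j whenever binary digit m−1 of j is 0. -/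

import Mathlib

open Complex

/-- Entry `(a, b)` of the `n`-fold tensor power `H^{⊗n}` of the Hadamard matrix
`H = (1/√2)[[1,1],[1,−1]]` acting on `ℂ^{2ⁿ}`, with indices identified with their binary
digits: `H^{⊗n}(a,b) = (1/√2)ⁿ · ∏_{l<n} (−1)^{a_l b_l}`. -/
noncomputable def HnMat (n : ℕ) : Matrix (Fin (2 ^ n)) (Fin (2 ^ n)) ℂ :=
  fun a b => ((1 / Real.sqrt 2 : ℝ) ^ n : ℂ) *
    ∏ l ∈ Finset.range n, (if (a : ℕ).testBit l ∧ (b : ℕ).testBit l then (-1 : ℂ) else 1)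

open Finset

/-!
Indexing `j = 2 (j / 2) + j₀`, the coordinate `x_j` is `α_{j₀}` times the Hadamard entry
`H^{⊗n}(j / 2, y) = 2^{-n/2} ∏_{l<n} (-1)^{(j/2)_l y_l}`. Bit `l` of `j / 2` is bit `l + 1`
of `j`, and bit `l` of `y` is `s_{l+1}` for `l + 1 < m` and `0` beyond, so the product becomes
`∏_{l=1}^{m-1} (-1)^{j_l s_l}`. Adding `2^m` to `j` changes none of the bits `0, …, m - 1`;
adding `2^{m-1}` toggles bit `m - 1` and keeps the lower ones, which flips exactly the factor
`l = m - 1` when `s_{m-1} = 1`.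
-/

@[to_additive Finset.sum_Icc_one_eq_sum_range]
theorem Finset.prod_Icc_one_eq_prod_range {M : Type*} [CommMonoid M] (f : ℕ → M) (k : ℕ) :
    ∏ i ∈ Icc 1 k, f i = ∏ i ∈ range k, f (i + 1) := by
  rw [range_eq_Ico, prod_Ico_add', zero_add, Ico_add_one_right_eq_Icc]

theorem Nat.testBit_sum_two_pow (S : Finset ℕ) (k : ℕ) :
    (∑ i ∈ S, 2 ^ i).testBit k ↔ k ∈ S := by
  rw [← Nat.mem_bitIndices, ← List.mem_toFinset, Finset.toFinset_bitIndices_sum_two_pow]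

theorem Nat.add_two_pow_mod_two {k : ℕ} (hk : k ≠ 0) (j : ℕ) : (j + 2 ^ k) % 2 = j % 2 := by
  simp [Nat.add_mod, Nat.pow_mod, hk]

section BitSign

variable {R : Type*} [CommRing R]

def bitSign (S : Finset ℕ) (s : ℕ → Bool) (j : ℕ) : R :=
  ∏ l ∈ S, if j.testBit l ∧ s l then -1 else 1

theorem bitSign_add_two_pow_of_forall_lt {S : Finset ℕ} {k : ℕ} (hS : ∀ l ∈ S, l < k)
    (s : ℕ → Bool) (j : ℕ) : (bitSign S s (j + 2 ^ k) : R) = bitSign S s j :=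
  prod_congr rfl fun l hl => by rw [add_comm, Nat.testBit_two_pow_add_gt (hS l hl)]

theorem bitSign_add_two_pow_of_mem {S : Finset ℕ} {k : ℕ} (hk : k ∈ S)
    (hS : ∀ l ∈ S, l ≤ k) {s : ℕ → Bool} (hs : s k) (j : ℕ) :
    (bitSign S s (j + 2 ^ k) : R) = -bitSign S s j := by
  have hlt : ∀ l ∈ S.erase k, l < k := fun l hl =>
    lt_of_le_of_ne (hS l (mem_of_mem_erase hl)) (ne_of_mem_erase hl)
  have hflip : (j + 2 ^ k).testBit k = !j.testBit k := by
    rw [add_comm, Nat.testBit_two_pow_add_eq]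
  rw [bitSign, bitSign, ← mul_prod_erase S _ hk, ← mul_prod_erase S _ hk]
  change _ * bitSign (S.erase k) s _ = -(_ * bitSign (S.erase k) s _)
  rw [bitSign_add_two_pow_of_forall_lt hlt, hflip]
  cases j.testBit k <;> simp [hs]

end BitSign

theorem testBit_iff_of_eq_sum_Icc {m y : ℕ} {s : ℕ → Bool}
    (hy : y = ∑ l ∈ Icc 1 (m - 1), if s l then 2 ^ (l - 1) else 0) (i : ℕ) :
    y.testBit i ↔ i < m - 1 ∧ s (i + 1) := by
  rw [hy, sum_Icc_one_eq_sum_range, ← sum_filter]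
  simp only [add_tsub_cancel_right, Nat.testBit_sum_two_pow, mem_filter, mem_range]

theorem HnMat_apply_div_two {n m : ℕ} (hmn : m ≤ n + 1) {s : ℕ → Bool} {y : Fin (2 ^ n)}
    (hy : ∀ i, (y : ℕ).testBit i ↔ i < m - 1 ∧ s (i + 1)) (j : ℕ) (hj : j / 2 < 2 ^ n) :
    HnMat n ⟨j / 2, hj⟩ y =
      ((1 / Real.sqrt 2 : ℝ) ^ n : ℂ) * bitSign (Icc 1 (m - 1)) s j := by
  have hout : ∀ l ∈ range n, l ∉ range (m - 1) →
      (if (j / 2).testBit l ∧ (y : ℕ).testBit l then (-1 : ℂ) else 1) = 1 := fun l _ hl => by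
    simp [hy, mem_range.not.mp hl]
  rw [HnMat, bitSign, prod_Icc_one_eq_prod_range,
    ← prod_subset (range_subset_range.mpr (show m - 1 ≤ n by omega)) hout]
  refine congrArg _ (prod_congr rfl fun l hl => ?_)
  simp [Nat.testBit_div_two, hy, mem_range.mp hl]

/-- Let `n ≥ 1`, `2 ≤ m ≤ n+1`, bits `s₁, …, s_{m−1}`, and `α ∈ ℂ²`.
Let `y = Σ_{l=1}^{m−1} s_l 2^{l−1}` and let `x ∈ ℂ^{2^{n+1}}` be the vector
`(H^{⊗n} e_y) ⊗ α`, the `ℂ²` factor carrying `α` occupying the least-significant qubit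
(bit `0`), i.e. `x_j = H^{⊗n}(j div 2, y) · α_{j mod 2}`.  Then for every
`j = Σ_{l=0}^{n} j_l 2^l`, the coordinate `x_j` equals
`2^{−n/2} (−1)^{Σ_{l=1}^{m−1} j_l s_l} α_{j₀}`;  consequently `x_{j+2^m} = x_j` whenever
`j + 2^m < 2^{n+1}`, and if `s_{m−1} = 1` then `x_{j+2^{m−1}} = −x_j` whenever binary
digit `m−1` of `j` is `0` (so that `j + 2^{m−1} < 2^{n+1}`). -/
theorem stmt15 (n m : ℕ) (hm : 2 ≤ m) (hmn : m ≤ n + 1)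
    (s : ℕ → Bool) (α : Fin 2 → ℂ) (y : Fin (2 ^ n))
    (hy : (y : ℕ) = ∑ l ∈ Finset.Icc 1 (m - 1), if s l then 2 ^ (l - 1) else 0) :
    let x : Fin (2 ^ (n + 1)) → ℂ := fun j =>
      HnMat n ⟨(j : ℕ) / 2, (Nat.div_lt_iff_lt_mul (by norm_num)).mpr (by rw [← pow_succ]; exact j.isLt)⟩ y *
        α ⟨(j : ℕ) % 2, by omega⟩
    (∀ j : Fin (2 ^ (n + 1)),
        x j = ((1 / Real.sqrt 2 : ℝ) ^ n : ℂ) *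
          (∏ l ∈ Finset.Icc 1 (m - 1), if (j : ℕ).testBit l ∧ s l then (-1 : ℂ) else 1) *
          α ⟨(j : ℕ) % 2, by omega⟩) ∧
    (∀ j : Fin (2 ^ (n + 1)), ∀ h : (j : ℕ) + 2 ^ m < 2 ^ (n + 1),
        x ⟨(j : ℕ) + 2 ^ m, h⟩ = x j) ∧
    (s (m - 1) = true → ∀ j : Fin (2 ^ (n + 1)), (j : ℕ).testBit (m - 1) = false →
        ∀ h : (j : ℕ) + 2 ^ (m - 1) < 2 ^ (n + 1),
          x ⟨(j : ℕ) + 2 ^ (m - 1), h⟩ = -x j) := by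
  intro x
  have hx (j : Fin (2 ^ (n + 1))) : x j = ((1 / Real.sqrt 2 : ℝ) ^ n : ℂ) *
      bitSign (Icc 1 (m - 1)) s j * α ⟨(j : ℕ) % 2, by omega⟩ := by
    simp only [x, HnMat_apply_div_two hmn (testBit_iff_of_eq_sum_Icc hy)]
  refine ⟨hx, fun j h => ?_, fun hs j _ h => ?_⟩
  · rw [hx, hx, bitSign_add_two_pow_of_forall_lt fun l hl => by have := (mem_Icc.mp hl).2; omega]
    simp only [Nat.add_two_pow_mod_two (show m ≠ 0 by omega)]
  · rw [hx, hx, bitSign_add_two_pow_of_mem (mem_Icc.mpr ⟨by omega, le_rfl⟩)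
      (fun l hl => (mem_Icc.mp hl).2) hs]
    simp only [Nat.add_two_pow_mod_two (show m - 1 ≠ 0 by omega), mul_neg, neg_mul]
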